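/- Let M be a divisibility monoid with set Σ of irreducible elements. Then the set {Δ_R(x) : x ∈ Σ, Δ_R(x) exists} generates the quasi-center of M. -/

import Mathlib

/-- `LDvd b a` : `b` left-divides `a`, i.e. `a = b * d` for some `d`. -/
def LDvd {M : Type*} [Monoid M] (b a : M) : Prop := ∃ d, a = b * d

/-- `c` is a right lcm of `a` and `b`. -/
def IsRightLcm {M : Type*} [Monoid M] (a b c : M) : Prop :=
  LDvd a c ∧ LDvd b c ∧ ∀ m, LDvd a m → LDvd b m → LDvd c m

/-- `1` is the only invertible element. -/
def Conical (M : Type*) [Monoid M] : Prop := ∀ u : M, IsUnit u → u = 1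

/-- Left and right cancellativity. -/
def Cancellative (M : Type*) [Monoid M] : Prop :=
  (∀ a b c : M, a * b = a * c → b = c) ∧ (∀ a b c : M, b * a = c * a → b = c)

/-- `IsRes a b r` : `r` is the residue `a \ b`, i.e. `a * r` is the right lcm `a ∨ b`. -/
def IsRes {M : Type*} [Monoid M] (a b r : M) : Prop := IsRightLcm a b (a * r)

/-- The set of irreducible elements of `M`. -/
def Irr (M : Type*) [Monoid M] : Set M :=
  {a | a ≠ 1 ∧ ∀ b c : M, a = b * c → b = 1 ∨ c = 1}

/-- `a` is quasi-central: `aΣ = Σa` where `Σ` is the set of irreducible elements. -/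
def QuasiCentral {M : Type*} [Monoid M] (a : M) : Prop :=
  (fun x => a * x) '' Irr M = (fun x => x * a) '' Irr M

/-- `g` is a left gcd of `a` and `b`. -/
def IsLeftGcd {M : Type*} [Monoid M] (a b g : M) : Prop :=
  LDvd g a ∧ LDvd g b ∧ ∀ d, LDvd d a → LDvd d b → LDvd d g

/-- `j` is the join of `x` and `y` inside the lattice `↓(a)` of left divisors of `a`. -/
def IsJoinIn {M : Type*} [Monoid M] (a x y j : M) : Prop :=
  LDvd j a ∧ LDvd x j ∧ LDvd y j ∧ ∀ m, LDvd m a → LDvd x m → LDvd y m → LDvd j m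

/-- A (left) divisibility monoid : cancellative, finitely generated by its irreducible
elements, any two elements admit a left gcd, and every `↓(a)` is a finite distributive
lattice under left divisibility (meets are left gcds, joins exist, distributivity holds). -/
structure IsDivisibilityMonoid (M : Type*) [Monoid M] : Prop where
  mul_left_cancel : ∀ a b c : M, a * b = a * c → b = c
  mul_right_cancel : ∀ a b c : M, b * a = c * a → b = c
  irr_finite : (Irr M).Finite
  irr_gen : ∀ a : M, a ∈ Submonoid.closure (Irr M)
  exists_gcd : ∀ a b : M, ∃ g, IsLeftGcd a b g
  divisors_finite : ∀ a : M, {b : M | LDvd b a}.Finite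
  exists_join : ∀ a x y : M, LDvd x a → LDvd y a → ∃ j, IsJoinIn a x y j
  distrib : ∀ a x y z : M, LDvd x a → LDvd y a → LDvd z a →
    ∀ jyz g gxy gxz j', IsJoinIn a y z jyz → IsLeftGcd x jyz g →
      IsLeftGcd x y gxy → IsLeftGcd x z gxz → IsJoinIn a gxy gxz j' → g = j'

/-- `d` is the (right) local delta of `a`: the right lcm of the set `{b \ a : b ∈ M}`,
all of whose elements are required to exist. -/
def IsLocalDelta {M : Type*} [Monoid M] (a d : M) : Prop :=
  (∀ b : M, ∃ r, IsRes b a r) ∧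
  (∀ b r : M, IsRes b a r → LDvd r d) ∧
  ∀ m : M, (∀ b r : M, IsRes b a r → LDvd r m) → LDvd d m

/-!
A quasi-central element `a` satisfies `M a ⊆ a M`, so for an irreducible `x ∣ a` every residue
`b \ x` exists and divides `a`; their join below `a` is the local delta `Δ_R(x)`. Conversely a
local delta `Δ` is quasi-central: `b \ x ∣ c ((b c) \ x)` gives `Δ ∣ c Δ` for every `c`, and
since `↓(y Δ)` is graded (all factorizations into irreducibles have the same length), `y Δ = Δ t`
with `y` irreducible forces `t` irreducible. Dividing a quasi-central `a` by `Δ_R(x)` leaves a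
quasi-central element with fewer left divisors, and induction concludes.
-/

section

variable {M : Type*} [Monoid M]

theorem LDvd.refl (a : M) : LDvd a a := dvd_refl a

theorem LDvd.trans {a b c : M} (h₁ : LDvd a b) (h₂ : LDvd b c) : LDvd a c := dvd_trans h₁ h₂

theorem LDvd.mul_left {b c : M} (h : LDvd b c) (a : M) : LDvd (a * b) (a * c) :=
  mul_dvd_mul_left a h

theorem one_ldvd (a : M) : LDvd 1 a := one_dvd a

theorem ldvd_mul_right (a b : M) : LDvd a (a * b) := dvd_mul_right a b

theorem eq_one_or_eq_of_ldvd_irr {x d : M} (hx : x ∈ Irr M) (h : LDvd d x) : d = 1 ∨ d = x := by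
  obtain ⟨e, rfl⟩ := h
  exact (hx.2 d e rfl).imp id fun he => by rw [he, mul_one]

theorem isRes_one_left (x : M) : IsRes 1 x x :=
  ⟨ldvd_mul_right 1 x, by rw [one_mul]; exact LDvd.refl x, fun _ _ hxm => by rwa [one_mul]⟩

theorem IsLocalDelta.ldvd {x D : M} (hD : IsLocalDelta x D) : LDvd x D :=
  hD.2.1 1 x (isRes_one_left x)

theorem QuasiCentral.exists_irr_mul_eq {a y : M} (ha : QuasiCentral a) (hy : y ∈ Irr M) :
    ∃ z ∈ Irr M, y * a = a * z := by
  obtain ⟨z, hz, hza⟩ : y * a ∈ (fun x => a * x) '' Irr M := ha ▸ ⟨y, hy, rfl⟩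
  exact ⟨z, hz, hza.symm⟩

theorem QuasiCentral.exists_mul_irr_eq {a y : M} (ha : QuasiCentral a) (hy : y ∈ Irr M) :
    ∃ z ∈ Irr M, a * y = z * a := by
  obtain ⟨z, hz, hza⟩ : a * y ∈ (fun x => x * a) '' Irr M := ha ▸ ⟨y, hy, rfl⟩
  exact ⟨z, hz, hza.symm⟩

namespace IsDivisibilityMonoid

theorem ldvd_of_mul_ldvd_mul_left (hM : IsDivisibilityMonoid M) {a b c : M}
    (h : LDvd (a * b) (a * c)) : LDvd b c :=
  (IsLeftRegular.dvd_cancel_left fun _ _ => hM.mul_left_cancel a _ _).mp h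

/-- Units are joins of `1` and `1` in `↓1`; distributivity forces all such joins to agree. -/
theorem eq_one_of_mul_eq_one (hM : IsDivisibilityMonoid M) {u v : M} (h : u * v = 1) :
    u = 1 := by
  have hu : LDvd u 1 := ⟨v, h.symm⟩
  have hjoin : IsJoinIn 1 1 1 u :=
    ⟨hu, one_ldvd u, one_ldvd u, fun m _ _ _ => ⟨v * m, by rw [← mul_assoc, h, one_mul]⟩⟩
  have hjoin₁ : IsJoinIn (1 : M) 1 1 1 :=
    ⟨LDvd.refl 1, LDvd.refl 1, LDvd.refl 1, fun m _ _ _ => one_ldvd m⟩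
  have hgcd : IsLeftGcd 1 u u := ⟨hu, LDvd.refl u, fun _ _ hdu => hdu⟩
  have hgcd₁ : IsLeftGcd (1 : M) 1 1 := ⟨LDvd.refl 1, LDvd.refl 1, fun _ hd _ => hd⟩
  exact hM.distrib 1 1 1 1 (LDvd.refl 1) (LDvd.refl 1) (LDvd.refl 1) u u 1 1 1
    hjoin hgcd hgcd₁ hgcd₁ hjoin₁

theorem eq_one_of_ldvd_one (hM : IsDivisibilityMonoid M) {a : M} (h : LDvd a 1) : a = 1 :=
  let ⟨_, hv⟩ := h
  hM.eq_one_of_mul_eq_one hv.symm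

theorem ldvd_antisymm (hM : IsDivisibilityMonoid M) {a b : M} (h₁ : LDvd a b) (h₂ : LDvd b a) :
    a = b := by
  obtain ⟨d, rfl⟩ := h₁
  obtain ⟨e, he⟩ := h₂
  have hde : d * e = 1 :=
    (hM.mul_left_cancel a 1 (d * e) (by rw [mul_one, ← mul_assoc, ← he])).symm
  rw [hM.eq_one_of_mul_eq_one hde, mul_one]

theorem exists_irr_ldvd (hM : IsDivisibilityMonoid M) {a : M} (ha : a ≠ 1) :
    ∃ x ∈ Irr M, LDvd x a := by
  obtain ⟨_ | ⟨x, l⟩, hl, rfl⟩ := Submonoid.exists_list_of_mem_closure (hM.irr_gen a)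
  · exact absurd List.prod_nil ha
  · exact ⟨x, hl x List.mem_cons_self, l.prod, List.prod_cons⟩

theorem exists_irr_eq_mul_of_isJoinIn (hM : IsDivisibilityMonoid M) {a x y j : M}
    (hx : x ∈ Irr M) (hy : y ∈ Irr M) (hxy : x ≠ y) (hj : IsJoinIn a x y j) :
    ∃ y' ∈ Irr M, j = x * y' := by
  obtain ⟨hja, ⟨y', rfl⟩, hyj, hjmin⟩ := hj
  refine ⟨y', ⟨?_, fun u v huv => ?_⟩, rfl⟩
  · rintro rfl
    rw [mul_one] at hyj
    exact (eq_one_or_eq_of_ldvd_irr hx hyj).elim hy.1 (Ne.symm hxy)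
  by_contra! ⟨hu, hv⟩
  -- `m = x u` lies strictly between `x` and `x ∨ y`, yet `m ∧ (x ∨ y) = (m ∧ x) ∨ (m ∧ y) = x`.
  have hmj : LDvd (x * u) (x * y') := ⟨v, by rw [huv, mul_assoc]⟩
  have hma : LDvd (x * u) a := hmj.trans hja
  have hxm : LDvd x (x * u) := ldvd_mul_right x u
  obtain ⟨g, hgm, hgy, hgmin⟩ := hM.exists_gcd (x * u) y
  have hg : g = 1 := by
    refine (eq_one_or_eq_of_ldvd_irr hy hgy).resolve_right fun hgy' => hv ?_
    have hjm := hM.ldvd_antisymm (hjmin _ hma hxm (hgy' ▸ hgm)) hmj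
    rw [huv, ← mul_assoc] at hjm
    exact hM.mul_left_cancel (x * u) v 1 (by rw [mul_one]; exact hjm)
  have hmx := hM.distrib a (x * u) x y hma (hxm.trans hma) (hyj.trans hja) (x * y') (x * u) x 1 x
    ⟨hja, ldvd_mul_right x y', hyj, hjmin⟩ ⟨LDvd.refl _, hmj, fun _ hd _ => hd⟩
    ⟨hxm, LDvd.refl x, fun _ _ hdx => hdx⟩ (hg ▸ ⟨hgm, hgy, hgmin⟩)
    ⟨hxm.trans hma, LDvd.refl x, one_ldvd x, fun _ _ hxm' _ => hxm'⟩
  exact hu (hM.mul_left_cancel x u 1 (by rw [hmx, mul_one]))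

theorem exists_irr_exchange (hM : IsDivisibilityMonoid M) {a x y : M} (hx : x ∈ Irr M)
    (hy : y ∈ Irr M) (hxy : x ≠ y) (hxa : LDvd x a) (hya : LDvd y a) :
    ∃ x' ∈ Irr M, ∃ y' ∈ Irr M, ∃ e, a = x * (y' * e) ∧ a = y * (x' * e) := by
  obtain ⟨j, hj⟩ := hM.exists_join a x y hxa hya
  obtain ⟨y', hy', rfl⟩ := hM.exists_irr_eq_mul_of_isJoinIn hx hy hxy hj
  obtain ⟨x', hx', hjx⟩ := hM.exists_irr_eq_mul_of_isJoinIn hy hx hxy.symm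
    ⟨hj.1, hj.2.2.1, hj.2.1, fun m hm hym hxm => hj.2.2.2 m hm hxm hym⟩
  obtain ⟨e, he⟩ := hj.1
  exact ⟨x', hx', y', hy', e, by rw [he, mul_assoc], by rw [he, hjx, mul_assoc]⟩

theorem length_eq_of_prod_eq (hM : IsDivisibilityMonoid M) {l₁ l₂ : List M}
    (h₁ : ∀ x ∈ l₁, x ∈ Irr M) (h₂ : ∀ x ∈ l₂, x ∈ Irr M) (h : l₁.prod = l₂.prod) :
    l₁.length = l₂.length := by
  match l₁, l₂ with
  | [], [] => rfl
  | [], y :: _ => exact absurd (hM.eq_one_of_mul_eq_one h.symm) (h₂ y List.mem_cons_self).1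
  | x :: _, [] => exact absurd (hM.eq_one_of_mul_eq_one h) (h₁ x List.mem_cons_self).1
  | x :: t₁, y :: t₂ =>
    rw [List.prod_cons, List.prod_cons] at h
    have ht₁ : ∀ z ∈ t₁, z ∈ Irr M := fun z hz => h₁ z (List.mem_cons_of_mem x hz)
    have ht₂ : ∀ z ∈ t₂, z ∈ Irr M := fun z hz => h₂ z (List.mem_cons_of_mem y hz)
    by_cases hxy : x = y
    · subst hxy
      simpa using hM.length_eq_of_prod_eq ht₁ ht₂ (hM.mul_left_cancel x _ _ h)
    obtain ⟨x', hx', y', hy', e, he₁, he₂⟩ := hM.exists_irr_exchange (h₁ x List.mem_cons_self)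
      (h₂ y List.mem_cons_self) hxy ⟨t₁.prod, rfl⟩ ⟨t₂.prod, h⟩
    obtain ⟨le, hle, rfl⟩ := Submonoid.exists_list_of_mem_closure (hM.irr_gen e)
    have hl₁ : t₁.length = (y' :: le).length :=
      hM.length_eq_of_prod_eq ht₁ (List.forall_mem_cons.mpr ⟨hy', hle⟩)
        (hM.mul_left_cancel x _ _ (by rw [List.prod_cons, ← he₁]))
    have hl₂ : (x' :: le).length = t₂.length :=
      hM.length_eq_of_prod_eq (List.forall_mem_cons.mpr ⟨hx', hle⟩) ht₂
        (hM.mul_left_cancel y _ _ (by rw [List.prod_cons, ← he₂, h]))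
    simp only [List.length_cons] at hl₁ hl₂ ⊢
    omega
termination_by l₁.length
-- the call on `x' :: le` decreases because `hl₁` makes it as long as `t₁`
decreasing_by all_goals (simp only [List.length_cons] at *; omega)

theorem mem_irr_of_mul_eq_mul (hM : IsDivisibilityMonoid M) {y a t : M} (hy : y ∈ Irr M)
    (h : y * a = a * t) : t ∈ Irr M := by
  obtain ⟨la, hla, rfl⟩ := Submonoid.exists_list_of_mem_closure (hM.irr_gen a)
  obtain ⟨lt, hlt, rfl⟩ := Submonoid.exists_list_of_mem_closure (hM.irr_gen t)
  have hlen := hM.length_eq_of_prod_eq (l₁ := y :: la) (l₂ := la ++ lt)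
    (List.forall_mem_cons.mpr ⟨hy, hla⟩) (List.forall_mem_append.mpr ⟨hla, hlt⟩)
    (by rw [List.prod_cons, List.prod_append, h])
  obtain ⟨z, rfl⟩ := List.length_eq_one_iff.mp (by simp at hlen; omega : lt.length = 1)
  simpa using hlt

theorem quasiCentral_of_forall_ldvd (hM : IsDivisibilityMonoid M) {a : M}
    (h : ∀ y ∈ Irr M, LDvd a (y * a)) : QuasiCentral a := by
  have hsub : (fun x => x * a) '' Irr M ⊆ (fun x => a * x) '' Irr M := by
    rintro _ ⟨y, hy, rfl⟩
    obtain ⟨t, ht⟩ := h y hy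
    exact ⟨t, hM.mem_irr_of_mul_eq_mul hy ht, ht.symm⟩
  have hcard : ((fun x => a * x) '' Irr M).ncard ≤ ((fun x => x * a) '' Irr M).ncard := by
    rw [Set.ncard_image_of_injective _ fun _ _ => hM.mul_left_cancel a _ _,
      Set.ncard_image_of_injective _ fun _ _ => hM.mul_right_cancel a _ _]
  exact (Set.eq_of_subset_of_ncard_le hsub hcard (hM.irr_finite.image _)).symm

theorem ldvd_mul_of_quasiCentral (hM : IsDivisibilityMonoid M) {a : M} (ha : QuasiCentral a)
    (b : M) : LDvd a (b * a) := by
  induction hM.irr_gen b using Submonoid.closure_induction with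
  | mem y hy =>
    obtain ⟨z, -, hz⟩ := ha.exists_irr_mul_eq hy
    exact ⟨z, hz⟩
  | one => exact ⟨1, by rw [one_mul, mul_one]⟩
  | mul u v _ _ hu hv =>
    obtain ⟨u', hu'⟩ := hu
    obtain ⟨v', hv'⟩ := hv
    exact ⟨u' * v', by rw [mul_assoc, hv', ← mul_assoc, hu', mul_assoc]⟩

theorem quasiCentral_mul (hM : IsDivisibilityMonoid M) {a b : M} (ha : QuasiCentral a)
    (hb : QuasiCentral b) : QuasiCentral (a * b) := by
  refine hM.quasiCentral_of_forall_ldvd fun y hy => ?_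
  obtain ⟨z, hz, hza⟩ := ha.exists_irr_mul_eq hy
  obtain ⟨w, -, hwb⟩ := hb.exists_irr_mul_eq hz
  exact ⟨w, by rw [← mul_assoc, hza, mul_assoc, hwb, mul_assoc]⟩

theorem quasiCentral_of_mul_left (hM : IsDivisibilityMonoid M) {a b : M}
    (hab : QuasiCentral (a * b)) (ha : QuasiCentral a) : QuasiCentral b := by
  refine hM.quasiCentral_of_forall_ldvd fun y hy => ?_
  obtain ⟨z, hz, hza⟩ := ha.exists_mul_irr_eq hy
  obtain ⟨w, -, hzw⟩ := hab.exists_irr_mul_eq hz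
  refine ⟨w, hM.mul_left_cancel a _ _ ?_⟩
  rw [← mul_assoc, hza, mul_assoc, hzw, mul_assoc]

def quasiCenter (hM : IsDivisibilityMonoid M) : Submonoid M where
  carrier := {a | QuasiCentral a}
  one_mem' := by simp [QuasiCentral]
  mul_mem' := hM.quasiCentral_mul

theorem exists_isRightLcm_ldvd (hM : IsDivisibilityMonoid M) {a b c : M} (hb : LDvd b a)
    (hc : LDvd c a) : ∃ j, IsRightLcm b c j ∧ LDvd j a := by
  obtain ⟨j, hja, hbj, hcj, hjmin⟩ := hM.exists_join a b c hb hc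
  refine ⟨j, ⟨hbj, hcj, fun m hbm hcm => ?_⟩, hja⟩
  obtain ⟨g, hga, hgm, hgmin⟩ := hM.exists_gcd a m
  exact (hjmin g hga (hgmin b hb hbm) (hgmin c hc hcm)).trans hgm

theorem exists_isRes_of_ldvd (hM : IsDivisibilityMonoid M) {a b x : M} (hb : LDvd b a)
    (hx : LDvd x a) : ∃ r, IsRes b x r := by
  obtain ⟨_, ⟨⟨r, rfl⟩, hj⟩, -⟩ := hM.exists_isRightLcm_ldvd hb hx
  exact ⟨r, ⟨r, rfl⟩, hj⟩

theorem exists_lcm_of_finite (hM : IsDivisibilityMonoid M) {a : M} {s : Set M} (hs : s.Finite)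
    (hsa : ∀ t ∈ s, LDvd t a) :
    ∃ j, LDvd j a ∧ (∀ t ∈ s, LDvd t j) ∧ ∀ m, (∀ t ∈ s, LDvd t m) → LDvd j m := by
  induction s, hs using Set.Finite.induction_on with
  | empty => exact ⟨1, one_ldvd a, fun _ => False.elim, fun m _ => one_ldvd m⟩
  | @insert t s _ _ ih =>
    obtain ⟨j, hja, hsj, hjmin⟩ := ih fun u hu => hsa u (Set.mem_insert_of_mem t hu)
    obtain ⟨j', ⟨hjj', htj', hj'min⟩, hj'a⟩ :=
      hM.exists_isRightLcm_ldvd hja (hsa t (Set.mem_insert t s))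
    refine ⟨j', hj'a, Set.forall_mem_insert.mpr ⟨htj', fun u hu => (hsj u hu).trans hjj'⟩,
      fun m hm => ?_⟩
    rw [Set.forall_mem_insert] at hm
    exact hj'min m (hjmin m hm.2) hm.1

theorem ncard_ldvd_lt (hM : IsDivisibilityMonoid M) {x : M} (hx : x ≠ 1) (b : M) :
    {d | LDvd d b}.ncard < {d | LDvd d (x * b)}.ncard := by
  have hsub : (fun d => x * d) '' {d | LDvd d b} ⊂ {d | LDvd d (x * b)} := by
    refine (Set.ssubset_iff_of_subset ?_).mpr ⟨1, one_ldvd _, ?_⟩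
    · rintro _ ⟨d, hd, rfl⟩
      exact LDvd.mul_left hd x
    · rintro ⟨d, -, hd⟩
      exact hx (hM.eq_one_of_mul_eq_one hd)
  rw [← Set.ncard_image_of_injective _ fun _ _ => hM.mul_left_cancel x _ _]
  exact Set.ncard_lt_ncard hsub (hM.divisors_finite _)

theorem ldvd_mul_of_isRes_mul (hM : IsDivisibilityMonoid M) {b c x r r' : M} (hr : IsRes b x r)
    (hr' : IsRes (b * c) x r') : LDvd r (c * r') := by
  have hx : LDvd x (b * (c * r')) := by rw [← mul_assoc]; exact hr'.2.1
  exact hM.ldvd_of_mul_ldvd_mul_left (hr.2.2 _ (ldvd_mul_right b _) hx)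

theorem quasiCentral_of_isLocalDelta (hM : IsDivisibilityMonoid M) {x D : M}
    (hD : IsLocalDelta x D) : QuasiCentral D := by
  obtain ⟨hres, hub, hleast⟩ := hD
  refine hM.quasiCentral_of_forall_ldvd fun y _ => hleast _ fun b r hr => ?_
  obtain ⟨r', hr'⟩ := hres (b * y)
  exact (hM.ldvd_mul_of_isRes_mul hr hr').trans ((hub _ _ hr').mul_left y)

theorem exists_isLocalDelta_ldvd (hM : IsDivisibilityMonoid M) {a x : M} (ha : QuasiCentral a)
    (hxa : LDvd x a) : ∃ D, IsLocalDelta x D ∧ LDvd D a := by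
  have hxb : ∀ b, LDvd x (b * a) := fun b => hxa.trans (hM.ldvd_mul_of_quasiCentral ha b)
  have hSa : ∀ r ∈ {r | ∃ b, IsRes b x r}, LDvd r a := by
    rintro r ⟨b, hr⟩
    exact hM.ldvd_of_mul_ldvd_mul_left (hr.2.2 _ (ldvd_mul_right b a) (hxb b))
  obtain ⟨D, hDa, hub, hleast⟩ :=
    hM.exists_lcm_of_finite ((hM.divisors_finite a).subset hSa) hSa
  exact ⟨D, ⟨fun b => hM.exists_isRes_of_ldvd (ldvd_mul_right b a) (hxb b),
    fun b r hr => hub r ⟨b, hr⟩, fun m hm => hleast m fun r ⟨b, hr⟩ => hm b r hr⟩, hDa⟩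

theorem mem_closure_of_quasiCentral (hM : IsDivisibilityMonoid M) {a : M} (ha : QuasiCentral a) :
    a ∈ Submonoid.closure {D | ∃ x ∈ Irr M, IsLocalDelta x D} := by
  by_cases ha₁ : a = 1
  · exact ha₁ ▸ one_mem _
  obtain ⟨x, hx, hxa⟩ := hM.exists_irr_ldvd ha₁
  obtain ⟨D, hD, b, hab⟩ := hM.exists_isLocalDelta_ldvd ha hxa
  have hD₁ : D ≠ 1 := fun h => hx.1 (hM.eq_one_of_ldvd_one (h ▸ hD.ldvd))
  rw [hab] at ha ⊢
  exact mul_mem (Submonoid.subset_closure ⟨x, hx, hD⟩)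
    (hM.mem_closure_of_quasiCentral (hM.quasiCentral_of_mul_left ha
      (hM.quasiCentral_of_isLocalDelta hD)))
termination_by {d | LDvd d a}.ncard
decreasing_by rw [hab]; exact hM.ncard_ldvd_lt hD₁ b

end IsDivisibilityMonoid

end

theorem stmt16 {M : Type*} [Monoid M] (hM : IsDivisibilityMonoid M) :
    {a : M | QuasiCentral a} =
      ↑(Submonoid.closure {d : M | ∃ x ∈ Irr M, IsLocalDelta x d}) :=
  Set.Subset.antisymm (fun _ => hM.mem_closure_of_quasiCentral)
    ((Submonoid.closure_le (S := hM.quasiCenter)).mpr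
      fun _ ⟨_, _, hD⟩ => hM.quasiCentral_of_isLocalDelta hD)
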